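/- arXiv:1906.09047 — 4 statements merged into one kernel-verified Lean document; each statement's English description precedes it below -/
import Mathlib

section
/- Let (X_t) be a stochastic process adapted to a filtration F_t on a state space S ⊆ ℝ≥0 with 0 ∈ S and T = min{t : X_t = 0}. If there exist δ > 0 and b > 0 such that for all t < T, E[X_t − X_{t+1} | F_t] ≤ δ and X_t ≤ b, then E[T | F_0] ≥ X_0/δ. -/
open MeasureTheory

/-- First hitting time of state `0`, valued in `ℕ∞` (`⊤` if never hit). -/
noncomputable def hittingTimeZero {Ω : Type*} (X : ℕ → Ω → ℝ) (ω : Ω) : ℕ∞ :=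
  ⨅ (t : ℕ) (_ : X t ω = 0), (t : ℕ∞)

/-!
Write `T = hittingTimeZero X` and `A t = {t < T}`, an `ℱ t`-measurable event. Because `X T = 0`
whenever `T < ∞`, the stopped process `1_{A t} X t` telescopes: for `s ∈ ℱ 0`,
`E[X 0; s] = E[X n; A n ∩ s] + ∑_{t<n} E[X t - X (t+1); A t ∩ s]`.
Conditioning on `ℱ t` bounds each increment by `δ P(A t ∩ s)`, and `X n ≤ b` on `A n` bounds the
first term by `b P(A n ∩ s)`. As `∑_t P(A t ∩ s) = E[T; s]`, when this is finite `P(A n ∩ s) → 0`,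
and letting `n → ∞` gives `E[X 0; s] ≤ δ E[T; s]`. Applied to `s ∩ {0 ≤ X 0}` this is the claim.
-/

open Filter Finset
open scoped ENNReal

lemma ENat.toENNReal_eq_tsum_ite_lt (m : ℕ∞) :
    (m : ℝ≥0∞) = ∑' t : ℕ, if (t : ℕ∞) < m then 1 else 0 := by
  induction m using ENat.recTopCoe with
  | top => simp
  | coe n =>
    rw [tsum_eq_sum (s := range n) fun t ht => by simpa using ht,
      sum_congr rfl fun t ht => if_pos (by simpa using ht)]
    simp

section HittingTime

variable {Ω : Type*} {X : ℕ → Ω → ℝ} {ω : Ω} {t : ℕ}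

lemma lt_hittingTimeZero_iff : (t : ℕ∞) < hittingTimeZero X ω ↔ ∀ k ≤ t, X k ω ≠ 0 := by
  rw [← ENat.add_one_le_iff (ENat.natCast_ne_top t), hittingTimeZero, le_iInf₂_iff]
  refine forall_congr' fun k => ?_
  rw [imp_not_comm]
  exact imp_congr_right fun _ => by norm_cast; omega

lemma apply_eq_zero_of_not_lt_hittingTimeZero (hlt : ∀ k < t, X k ω ≠ 0)
    (hge : ¬(t : ℕ∞) < hittingTimeZero X ω) : X t ω = 0 := by
  by_contra h
  exact hge <| lt_hittingTimeZero_iff.2 fun k hk => hk.lt_or_eq.elim (hlt k) (· ▸ h)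

lemma antitone_setOf_lt_hittingTimeZero :
    Antitone fun t : ℕ => {ω | (t : ℕ∞) < hittingTimeZero X ω} := fun _ _ hst =>
  Set.ofPred_subset_ofPred.2 fun _ h => (Nat.cast_le.2 hst).trans_lt h

lemma measurableSet_lt_hittingTimeZero {m : MeasurableSpace Ω}
    (hX : ∀ k ≤ t, Measurable[m] (X k)) :
    MeasurableSet[m] {ω | (t : ℕ∞) < hittingTimeZero X ω} := by
  have : {ω | (t : ℕ∞) < hittingTimeZero X ω} = ⋂ k ∈ Set.Iic t, X k ⁻¹' {0}ᶜ := by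
    ext; simp [lt_hittingTimeZero_iff]
  rw [this]
  exact .biInter (Set.to_countable _) fun k hk => hX k hk (measurableSet_singleton 0).compl

end HittingTime

section

variable {Ω : Type*} {m0 : MeasurableSpace Ω} {μ : Measure Ω}

lemma setIntegral_le_mul_measureReal [IsFiniteMeasure μ] {f : Ω → ℝ} {u : Set Ω} {c : ℝ}
    (hf : IntegrableOn f u μ) (hu : MeasurableSet u) (h : ∀ᵐ ω ∂μ, ω ∈ u → f ω ≤ c) :
    ∫ ω in u, f ω ∂μ ≤ c * μ.real u := by
  calc ∫ ω in u, f ω ∂μ ≤ ∫ _ in u, c ∂μ := setIntegral_mono_on_ae hf integrableOn_const hu h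
    _ = c * μ.real u := by rw [setIntegral_const, smul_eq_mul, mul_comm]

lemma setIntegral_le_mul_measureReal_of_condExp_le [IsFiniteMeasure μ] {m : MeasurableSpace Ω}
    (hm : m ≤ m0) {f : Ω → ℝ} {u : Set Ω} {c : ℝ} (hf : Integrable f μ) (hu : MeasurableSet[m] u)
    (h : ∀ᵐ ω ∂μ, ω ∈ u → μ[f | m] ω ≤ c) : ∫ ω in u, f ω ∂μ ≤ c * μ.real u := by
  rw [← setIntegral_condExp hm hf hu]
  exact setIntegral_le_mul_measureReal integrable_condExp.integrableOn (hm u hu) h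

lemma lintegral_enat_eq_tsum_measure_lt {τ : Ω → ℕ∞}
    (hτ : ∀ t : ℕ, MeasurableSet {ω | (t : ℕ∞) < τ ω}) :
    ∫⁻ ω, (τ ω : ℝ≥0∞) ∂μ = ∑' t : ℕ, μ {ω | (t : ℕ∞) < τ ω} := by
  simp_rw [← lintegral_indicator_one (hτ _)]
  rw [← lintegral_tsum fun t => (measurable_one.indicator (hτ t)).aemeasurable]
  refine lintegral_congr fun ω => ?_
  simp only [ENat.toENNReal_eq_tsum_ite_lt, Set.indicator_apply, Set.mem_ofPred_eq, Pi.one_apply]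

lemma setLIntegral_ofReal_eq_ofReal_setIntegral_inter_setOf_nonneg {f : Ω → ℝ} {s : Set Ω}
    (hf : Integrable f μ) (hfm : Measurable f) (hs : MeasurableSet s) :
    ∫⁻ ω in s, ENNReal.ofReal (f ω) ∂μ = ENNReal.ofReal (∫ ω in {ω | 0 ≤ f ω} ∩ s, f ω ∂μ) := by
  have hnn : MeasurableSet {ω | 0 ≤ f ω} := measurableSet_le measurable_const hfm
  rw [ofReal_integral_eq_lintegral_ofReal hf.integrableOn
      ((ae_restrict_mem (hnn.inter hs)).mono fun ω hω => hω.1),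
    ← Measure.restrict_restrict hnn, setLIntegral_eq_of_support_subset (μ := μ.restrict s)]
  exact fun ω hω => (ENNReal.ofReal_pos.1 (pos_iff_ne_zero.2 hω)).le

variable {X : ℕ → Ω → ℝ}

lemma setIntegral_zero_eq_add_sum_setIntegral_sub (hX : ∀ t, Measurable (X t))
    (hint : ∀ t, Integrable (X t) μ) {s : Set Ω} (hs : MeasurableSet s) (n : ℕ) :
    ∫ ω in s, X 0 ω ∂μ = ∫ ω in {ω | (n : ℕ∞) < hittingTimeZero X ω} ∩ s, X n ω ∂μ +
      ∑ t ∈ range n, ∫ ω in {ω | (t : ℕ∞) < hittingTimeZero X ω} ∩ s, (X t ω - X (t + 1) ω) ∂μ := by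
  have hA (t : ℕ) : MeasurableSet {ω | (t : ℕ∞) < hittingTimeZero X ω} :=
    measurableSet_lt_hittingTimeZero fun k _ => hX k
  induction n with
  | zero =>
    rw [sum_range_zero, add_zero]
    exact setIntegral_eq_of_subset_of_forall_sdiff_eq_zero hs Set.inter_subset_right
      fun ω hω => apply_eq_zero_of_not_lt_hittingTimeZero (by simp) fun h => hω.2 ⟨h, hω.1⟩
  | succ n ih =>
    have hstop : ∫ ω in {ω | (n : ℕ∞) < hittingTimeZero X ω} ∩ s, X (n + 1) ω ∂μ =
        ∫ ω in {ω | ((n + 1 : ℕ) : ℕ∞) < hittingTimeZero X ω} ∩ s, X (n + 1) ω ∂μ := by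
      refine setIntegral_eq_of_subset_of_forall_sdiff_eq_zero ((hA n).inter hs)
        (Set.inter_subset_inter_left _ (antitone_setOf_lt_hittingTimeZero n.le_succ))
        fun ω hω => apply_eq_zero_of_not_lt_hittingTimeZero ?_ fun h => hω.2 ⟨h, hω.1.2⟩
      exact fun k hk => lt_hittingTimeZero_iff.1 hω.1.1 k (Nat.lt_succ_iff.1 hk)
    rw [ih, sum_range_succ, integral_sub (hint n).integrableOn (hint (n + 1)).integrableOn,
      ← hstop]
    ring

end

section Drift

variable {Ω : Type*} {m0 : MeasurableSpace Ω} {μ : Measure Ω} [IsFiniteMeasure μ]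
  {ℱ : Filtration ℕ m0} {X : ℕ → Ω → ℝ} {δ b : ℝ}

lemma setIntegral_zero_le_of_drift_le (hX : Adapted ℱ X) (hint : ∀ t, Integrable (X t) μ)
    (hdrift : ∀ t : ℕ, ∀ᵐ ω ∂μ,
      (t : ℕ∞) < hittingTimeZero X ω → (μ[fun ω => X t ω - X (t + 1) ω | ℱ t]) ω ≤ δ)
    (hbound : ∀ t : ℕ, ∀ᵐ ω ∂μ, (t : ℕ∞) < hittingTimeZero X ω → X t ω ≤ b)
    {s : Set Ω} (hs : MeasurableSet[ℱ 0] s) (n : ℕ) :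
    ∫ ω in s, X 0 ω ∂μ ≤ b * μ.real ({ω | (n : ℕ∞) < hittingTimeZero X ω} ∩ s) +
      δ * ∑ t ∈ range n, μ.real ({ω | (t : ℕ∞) < hittingTimeZero X ω} ∩ s) := by
  have hA (t : ℕ) : MeasurableSet[ℱ t] ({ω | (t : ℕ∞) < hittingTimeZero X ω} ∩ s) :=
    (measurableSet_lt_hittingTimeZero fun k hk => (hX k).mono (ℱ.mono hk) le_rfl).inter
      (ℱ.mono (Nat.zero_le t) s hs)
  rw [setIntegral_zero_eq_add_sum_setIntegral_sub (fun t => (hX t).mono (ℱ.le t) le_rfl)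
    hint (ℱ.le 0 s hs), mul_sum]
  gcongr with t
  · exact setIntegral_le_mul_measureReal (hint n).integrableOn (ℱ.le n _ (hA n))
      ((hbound n).mono fun ω h hω => h hω.1)
  · exact setIntegral_le_mul_measureReal_of_condExp_le (ℱ.le t) ((hint t).sub (hint (t + 1)))
      (hA t) ((hdrift t).mono fun ω h hω => h hω.1)

lemma ofReal_setIntegral_zero_le_mul_setLIntegral_hittingTimeZero (hδ : 0 < δ)
    (hX : Adapted ℱ X) (hint : ∀ t, Integrable (X t) μ)
    (hdrift : ∀ t : ℕ, ∀ᵐ ω ∂μ,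
      (t : ℕ∞) < hittingTimeZero X ω → (μ[fun ω => X t ω - X (t + 1) ω | ℱ t]) ω ≤ δ)
    (hbound : ∀ t : ℕ, ∀ᵐ ω ∂μ, (t : ℕ∞) < hittingTimeZero X ω → X t ω ≤ b)
    {s : Set Ω} (hs : MeasurableSet[ℱ 0] s) :
    ENNReal.ofReal (∫ ω in s, X 0 ω ∂μ) ≤
      ENNReal.ofReal δ * ∫⁻ ω in s, (hittingTimeZero X ω : ℝ≥0∞) ∂μ := by
  have hA (t : ℕ) : MeasurableSet {ω | (t : ℕ∞) < hittingTimeZero X ω} :=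
    measurableSet_lt_hittingTimeZero fun k _ => (hX k).mono (ℱ.le k) le_rfl
  rw [lintegral_enat_eq_tsum_measure_lt hA]
  simp_rw [Measure.restrict_apply (hA _)]
  set M := ∑' t : ℕ, μ ({ω | (t : ℕ∞) < hittingTimeZero X ω} ∩ s)
  obtain hM | hM := eq_or_ne M ⊤
  · simp [hM, hδ]
  have hsum : Summable fun t : ℕ => μ.real ({ω | (t : ℕ∞) < hittingTimeZero X ω} ∩ s) :=
    ENNReal.summable_toReal hM
  have hle : ∫ ω in s, X 0 ω ∂μ ≤ δ * M.toReal := by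
    rw [ENNReal.tsum_toReal_eq fun _ => measure_ne_top μ _]
    simp_rw [← measureReal_def]
    refine ge_of_tendsto' (x := atTop) ?_ (setIntegral_zero_le_of_drift_le hX hint hdrift hbound hs)
    simpa using (hsum.tendsto_atTop_zero.const_mul b).add (hsum.hasSum.tendsto_sum_nat.const_mul δ)
  rw [← ENNReal.ofReal_toReal hM, ← ENNReal.ofReal_mul hδ.le]
  exact ENNReal.ofReal_le_ofReal hle

end Drift

theorem additive_drift_lower_general
    {Ω : Type*} {m0 : MeasurableSpace Ω} {μ : Measure Ω} [IsProbabilityMeasure μ]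
    (ℱ : Filtration ℕ m0) (X : ℕ → Ω → ℝ)
    (hadapted : Adapted ℱ X)
    (hint : ∀ t, Integrable (X t) μ)
    (δ b : ℝ) (hδ : 0 < δ)
    (hdrift : ∀ t : ℕ, ∀ᵐ ω ∂μ,
      (t : ℕ∞) < hittingTimeZero X ω →
        (μ[fun ω => X t ω - X (t + 1) ω | ℱ t]) ω ≤ δ)
    (hbound : ∀ t : ℕ, ∀ᵐ ω ∂μ,
      (t : ℕ∞) < hittingTimeZero X ω → X t ω ≤ b) :
    ∀ s : Set Ω, MeasurableSet[ℱ 0] s →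
      ∫⁻ ω in s, ENNReal.ofReal (X 0 ω / δ) ∂μ
        ≤ ∫⁻ ω in s, (hittingTimeZero X ω : ENNReal) ∂μ := by
  intro s hs
  have hs' : MeasurableSet[ℱ 0] ({ω | 0 ≤ X 0 ω} ∩ s) :=
    (measurableSet_le measurable_const (hadapted 0)).inter hs
  calc ∫⁻ ω in s, ENNReal.ofReal (X 0 ω / δ) ∂μ
      = (∫⁻ ω in s, ENNReal.ofReal (X 0 ω) ∂μ) / ENNReal.ofReal δ := by
        simp_rw [ENNReal.ofReal_div_of_pos hδ, div_eq_mul_inv]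
        exact lintegral_mul_const' _ _ (ENNReal.inv_ne_top.2 (ENNReal.ofReal_pos.2 hδ).ne')
    _ = ENNReal.ofReal (∫ ω in {ω | 0 ≤ X 0 ω} ∩ s, X 0 ω ∂μ) / ENNReal.ofReal δ := by
        rw [setLIntegral_ofReal_eq_ofReal_setIntegral_inter_setOf_nonneg (hint 0)
          ((hadapted 0).mono (ℱ.le 0) le_rfl) (ℱ.le 0 s hs)]
    _ ≤ ∫⁻ ω in {ω | 0 ≤ X 0 ω} ∩ s, (hittingTimeZero X ω : ℝ≥0∞) ∂μ :=
        ENNReal.div_le_of_le_mul' <| ofReal_setIntegral_zero_le_mul_setLIntegral_hittingTimeZero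
          hδ hadapted hint hdrift hbound hs'
    _ ≤ ∫⁻ ω in s, (hittingTimeZero X ω : ℝ≥0∞) ∂μ := lintegral_mono_set Set.inter_subset_right

/-- Additive drift theorem, lower bound: if the process on `ℝ≥0` (adapted to a
filtration `ℱ`) is bounded by `b` and has drift at most `δ > 0` towards `0`
on the event `t < T`, then `E[T | ℱ 0] ≥ X 0 / δ`
(stated via set integrals over `ℱ 0`-measurable sets). -/
theorem additive_drift_lower
    {Ω : Type*} {m0 : MeasurableSpace Ω} {μ : Measure Ω} [IsProbabilityMeasure μ]
    (ℱ : Filtration ℕ m0) (X : ℕ → Ω → ℝ)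
    (hadapted : Adapted ℱ X)
    (hnonneg : ∀ t ω, 0 ≤ X t ω)
    (hint : ∀ t, Integrable (X t) μ)
    (δ b : ℝ) (hδ : 0 < δ) (hb : 0 < b)
    (hdrift : ∀ t : ℕ, ∀ᵐ ω ∂μ,
      (t : ℕ∞) < hittingTimeZero X ω →
        (μ[fun ω => X t ω - X (t + 1) ω | ℱ t]) ω ≤ δ)
    (hbound : ∀ t : ℕ, ∀ᵐ ω ∂μ,
      (t : ℕ∞) < hittingTimeZero X ω → X t ω ≤ b) :
    ∀ s : Set Ω, MeasurableSet[ℱ 0] s →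
      ∫⁻ ω in s, ENNReal.ofReal (X 0 ω / δ) ∂μ
        ≤ ∫⁻ ω in s, (hittingTimeZero X ω : ENNReal) ∂μ :=
  additive_drift_lower_general ℱ X hadapted hint δ b hδ hdrift hbound
end

section
/- Let (X_t) be a non-increasing Markov process on {0, ..., N}, Δ : {1, ..., N} → (0, ∞) with E[X_t − X_{t+1} | X_t = k] ≥ Δ(k) for all k. Define η(k) = E[Σ_{j=X_{t+1}+1}^{k} 1/Δ(j) | X_t = k] and η* = min_{k=1,...,N} η(k). Then the first hitting time T = min{t : X_t = 0} satisfies E[T | X_0] ≤ Σ_{k=1}^{X_0} 1/(η* Δ(k)). -/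
/-!
With `g k = ∑_{i=1}^k 1 / (η* Δ i)`, the expected one-step decrease of `g` from a state
`k ≥ 1` is `η(k) / η* ≥ 1`, while `g 0 = 0` and `0` is absorbing. Hence
`E[g(X_{t+1})] + P(X_t ≠ 0) ≤ E[g(X_t)]`, and summing over `t` gives
`E[T] = ∑_t P(X_t ≠ 0) ≤ g(X_0)`. Positivity of `η*` comes from the drift condition:
a positive expected decrease forces some downward transition.
-/

open MeasureTheory ProbabilityTheory Finset

/-- First hitting time of state `0` for an `ℕ`-valued process, valued in `ℕ∞`. -/
noncomputable def hitZero {Ω : Type*} (X : ℕ → Ω → ℕ) (ω : Ω) : ℕ∞ :=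
  ⨅ (t : ℕ) (_ : X t ω = 0), (t : ℕ∞)

/-- `(X_t)` is a time-homogeneous Markov process with one-step transition
probabilities `p`. -/
def IsMarkovWith {Ω : Type*} [MeasurableSpace Ω] (μ : Measure Ω)
    (X : ℕ → Ω → ℕ) (p : ℕ → ℕ → ℝ) : Prop :=
  ∀ (t k j : ℕ) (A : Set Ω),
    MeasurableSet[MeasurableSpace.comap (fun ω (i : Fin (t + 1)) => X i ω) inferInstance] A →
      μ (A ∩ {ω | X t ω = k} ∩ {ω | X (t + 1) ω = j})
        = ENNReal.ofReal (p k j) * μ (A ∩ {ω | X t ω = k})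

open scoped ENNReal

theorem ENNReal.tsum_le_of_add_le {a F : ℕ → ℝ≥0∞} (h : ∀ t, a t + F (t + 1) ≤ F t) :
    ∑' t, a t ≤ F 0 := by
  have partial_sums : ∀ n, ∑ t ∈ range n, a t + F n ≤ F 0 := by
    intro n
    induction n with
    | zero => simp
    | succ n ih => calc
        ∑ t ∈ range (n + 1), a t + F (n + 1) = ∑ t ∈ range n, a t + (a n + F (n + 1)) := by
          rw [sum_range_succ, add_assoc]
        _ ≤ F 0 := le_trans (by gcongr; exact h n) ih
  exact ENNReal.tsum_le_of_sum_range_le fun n => le_trans le_self_add (partial_sums n)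

theorem ENat.tsum_indicator_lt (n : ℕ∞) :
    ∑' t : ℕ, {t : ℕ | (t : ℕ∞) < n}.indicator (1 : ℕ → ℝ≥0∞) t = n := by
  induction n using ENat.recTopCoe with
  | top => simp
  | coe n =>
    rw [tsum_eq_sum (s := range n) fun t ht => by simp_all,
      sum_congr rfl fun t ht => Set.indicator_of_mem (by simpa using ht) _]
    simp

theorem coe_lt_hitZero_iff {Ω : Type*} {X : ℕ → Ω → ℕ} {ω : Ω}
    (hX : Antitone fun t => X t ω) (t : ℕ) : (t : ℕ∞) < hitZero X ω ↔ X t ω ≠ 0 := by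
  constructor
  · intro ht h0
    exact (iInf₂_le t h0 : hitZero X ω ≤ t).not_gt ht
  · intro ht
    rw [← ENat.add_one_le_iff (ENat.natCast_ne_top t)]
    refine le_iInf₂ fun s hs => ?_
    have : t < s := by
      by_contra! hst
      exact ht (Nat.eq_zero_of_le_zero (hs ▸ hX hst))
    exact_mod_cast this

theorem hitZero_eq_tsum {Ω : Type*} {X : ℕ → Ω → ℕ} {ω : Ω} (hX : Antitone fun t => X t ω) :
    (hitZero X ω : ℝ≥0∞) = ∑' t, ({0}ᶜ : Set ℕ).indicator 1 (X t ω) := by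
  rw [← ENat.tsum_indicator_lt]
  congr 1 with t
  simp [Set.indicator_apply, coe_lt_hitZero_iff hX]

section Transitions

variable {Ω : Type*} [MeasurableSpace Ω] {ν : Measure Ω} {X : ℕ → Ω → ℕ} {p : ℕ → ℕ → ℝ}

theorem lintegral_comp_eq_tsum {Y : Ω → ℕ} (hY : Measurable Y) (f : ℕ → ℝ≥0∞) :
    ∫⁻ ω, f (Y ω) ∂ν = ∑' k, f k * ν {ω | Y ω = k} := by
  rw [← lintegral_map measurable_from_top hY, lintegral_countable']
  congr 1 with k
  rw [Measure.map_apply hY (measurableSet_singleton k)]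
  rfl

theorem measure_eq_tsum_inter {Y : Ω → ℕ} (hY : Measurable Y) (B : Set Ω) :
    ν B = ∑' k, ν ({ω | Y ω = k} ∩ B) := by
  have h := lintegral_comp_eq_tsum (ν := ν.restrict B) hY 1
  simp only [Pi.one_apply, lintegral_one, Measure.restrict_apply_univ, one_mul] at h
  rw [h]
  congr 1 with k
  exact Measure.restrict_apply (hY (measurableSet_singleton k))

theorem lintegral_hitZero (hX : ∀ t, Measurable (X t)) (hdec : ∀ t ω, X (t + 1) ω ≤ X t ω) :
    ∫⁻ ω, (hitZero X ω : ℝ≥0∞) ∂ν = ∑' t, ∫⁻ ω, ({0}ᶜ : Set ℕ).indicator 1 (X t ω) ∂ν := by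
  simp_rw [hitZero_eq_tsum (antitone_nat_of_succ_le fun t => hdec t _)]
  exact lintegral_tsum fun t =>
    ((measurable_of_countable (({0}ᶜ : Set ℕ).indicator 1)).comp (hX t)).aemeasurable

def HasTransitionProbs (ν : Measure Ω) (X : ℕ → Ω → ℕ) (p : ℕ → ℕ → ℝ) : Prop :=
  ∀ t k j, ν ({ω | X t ω = k} ∩ {ω | X (t + 1) ω = j})
    = ENNReal.ofReal (p k j) * ν {ω | X t ω = k}

namespace HasTransitionProbs

theorem eq_zero_of_lt (h : HasTransitionProbs ν X p) {t k j : ℕ}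
    (hdec : ∀ ω, X (t + 1) ω ≤ X t ω) (hp : 0 ≤ p k j) (hk : ν {ω | X t ω = k} ≠ 0)
    (hkj : k < j) : p k j = 0 := by
  have hempty : {ω | X t ω = k} ∩ {ω | X (t + 1) ω = j} = ∅ := by
    ext ω
    simp only [Set.mem_inter_iff, Set.mem_ofPred_eq, Set.mem_empty_iff_false, iff_false]
    rintro ⟨rfl, rfl⟩
    exact (hdec ω).not_gt hkj
  have := h t k j
  rw [hempty, measure_empty, eq_comm, mul_eq_zero, ENNReal.ofReal_eq_zero] at this
  exact le_antisymm (this.resolve_right hk) hp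

theorem lintegral_comp_succ (h : HasTransitionProbs ν X p) (hX : ∀ t, Measurable (X t))
    (t : ℕ) (g : ℕ → ℝ≥0∞) :
    ∫⁻ ω, g (X (t + 1) ω) ∂ν
      = ∑' k, (∑' j, ENNReal.ofReal (p k j) * g j) * ν {ω | X t ω = k} := by
  calc ∫⁻ ω, g (X (t + 1) ω) ∂ν
      = ∑' j, ∑' k, g j * (ENNReal.ofReal (p k j) * ν {ω | X t ω = k}) := by
        rw [lintegral_comp_eq_tsum (hX (t + 1))]
        congr 1 with j
        rw [measure_eq_tsum_inter (hX t) {ω | X (t + 1) ω = j}, ← ENNReal.tsum_mul_left]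
        congr 1 with k
        rw [h t k j]
    _ = _ := by
        rw [ENNReal.tsum_comm]
        simp_rw [← ENNReal.tsum_mul_right]
        congr 1 with k
        congr 1 with j
        ring

theorem tsum_lintegral_le (h : HasTransitionProbs ν X p) (hX : ∀ t, Measurable (X t))
    (c g : ℕ → ℝ≥0∞)
    (hg : ∀ t k, ν {ω | X t ω = k} ≠ 0 → c k + ∑' j, ENNReal.ofReal (p k j) * g j ≤ g k) :
    ∑' t, ∫⁻ ω, c (X t ω) ∂ν ≤ ∫⁻ ω, g (X 0 ω) ∂ν := by
  refine ENNReal.tsum_le_of_add_le (F := fun t => ∫⁻ ω, g (X t ω) ∂ν) fun t => ?_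
  rw [h.lintegral_comp_succ hX, lintegral_comp_eq_tsum (hX t), lintegral_comp_eq_tsum (hX t),
    ← ENNReal.tsum_add]
  refine ENNReal.tsum_le_tsum fun k => ?_
  by_cases hk : ν {ω | X t ω = k} = 0
  · simp [hk]
  · rw [← add_mul]
    gcongr
    exact hg t k hk

end HasTransitionProbs

theorem IsMarkovWith.hasTransitionProbs_restrict {μ : Measure Ω} (h : IsMarkovWith μ X p)
    (hX0 : Measurable (X 0)) (k0 : ℕ) : HasTransitionProbs (μ.restrict {ω | X 0 ω = k0}) X p := by
  intro t k j
  set A := {ω | X 0 ω = k0}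
  have hA : MeasurableSet[MeasurableSpace.comap (fun ω (i : Fin (t + 1)) => X i ω) inferInstance]
      A := ⟨(fun v => v 0) ⁻¹' {k0}, measurable_pi_apply 0 (measurableSet_singleton k0), rfl⟩
  have hA' : MeasurableSet A := hX0 (measurableSet_singleton k0)
  rw [Measure.restrict_apply' hA', Measure.restrict_apply' hA', Set.inter_comm _ A,
    Set.inter_comm _ A, ← Set.inter_assoc, h t k j A hA]

end Transitions

noncomputable def driftPotential (Δ : ℕ → ℝ) (η : ℝ) (k : ℕ) : ℝ :=
  ∑ i ∈ Icc 1 k, 1 / (η * Δ i)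

section DriftPotential

variable {Δ : ℕ → ℝ} {η : ℝ} {q : ℕ → ℝ} {k : ℕ}

theorem driftPotential_nonneg (hΔ : ∀ i ∈ Icc 1 k, 0 < Δ i) (hη : 0 ≤ η) :
    0 ≤ driftPotential Δ η k :=
  sum_nonneg fun i hi => by have := hΔ i hi; positivity

theorem driftPotential_sub {l k : ℕ} (hlk : l ≤ k) :
    driftPotential Δ η k - driftPotential Δ η l = η⁻¹ * ∑ i ∈ Icc (l + 1) k, 1 / Δ i := by
  have hIoc : ∀ n, Icc 1 n = Ioc 0 n := fun n => Icc_add_one_left_eq_Ioc 0 n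
  rw [driftPotential, driftPotential, hIoc, hIoc, ← sum_Ioc_consecutive _ (Nat.zero_le l) hlk,
    add_sub_cancel_left, Icc_add_one_left_eq_Ioc, mul_sum]
  exact sum_congr rfl fun i _ => by ring

theorem one_add_sum_mul_driftPotential_le
    (hq : ∑ j ∈ range (k + 1), q j = 1) (hη : 0 < η)
    (hηq : η ≤ ∑ l ∈ range k, q l * ∑ i ∈ Icc (l + 1) k, 1 / Δ i) :
    1 + ∑ j ∈ range (k + 1), q j * driftPotential Δ η j ≤ driftPotential Δ η k := by
  have hdiff : ∑ j ∈ range (k + 1), q j * (driftPotential Δ η k - driftPotential Δ η j)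
      = η⁻¹ * ∑ l ∈ range k, q l * ∑ i ∈ Icc (l + 1) k, 1 / Δ i := by
    rw [sum_range_succ, sub_self, mul_zero, add_zero, mul_sum]
    exact sum_congr rfl fun l hl => by
      rw [driftPotential_sub (mem_range.1 hl).le]
      ring
  have hone : 1 ≤ η⁻¹ * ∑ l ∈ range k, q l * ∑ i ∈ Icc (l + 1) k, 1 / Δ i :=
    (one_le_inv_mul₀ hη).2 hηq
  simp only [mul_sub, sum_sub_distrib, ← sum_mul, hq, one_mul] at hdiff
  linarith


theorem sum_mul_sum_one_div_pos (s : Finset ℕ) (hq : ∀ j, 0 ≤ q j)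
    (hΔ : ∀ i ∈ Icc 1 k, 0 < Δ i) (hdrift : 0 < ∑ j ∈ s, q j * ((k : ℝ) - j)) :
    0 < ∑ l ∈ range k, q l * ∑ i ∈ Icc (l + 1) k, 1 / Δ i := by
  obtain ⟨l, -, hl⟩ := exists_lt_of_sum_lt (s := s) (f := fun _ => 0)
    (g := fun j => q j * ((k : ℝ) - j)) (by simpa using hdrift)
  obtain ⟨hql, hlk⟩ : 0 < q l ∧ 0 < (k : ℝ) - l :=
    (pos_and_pos_or_neg_and_neg_of_mul_pos hl).resolve_right fun h => (hq l).not_gt h.1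
  have hlk : l < k := by exact_mod_cast sub_pos.1 hlk
  have hinner : ∀ m, 0 ≤ ∑ i ∈ Icc (m + 1) k, 1 / Δ i := fun m =>
    sum_nonneg fun i hi => (one_div_pos.2 (hΔ i (by simp at hi ⊢; omega))).le
  refine sum_pos' (fun m _ => mul_nonneg (hq m) (hinner m)) ⟨l, mem_range.2 hlk, ?_⟩
  refine mul_pos hql (sum_pos (fun i hi => one_div_pos.2 (hΔ i ?_)) (nonempty_Icc.2 hlk))
  simp only [mem_Icc] at hi ⊢
  omega

theorem indicator_add_tsum_le_driftPotential (hq0 : ∀ j, 0 ≤ q j)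
    (hq1 : ∑ j ∈ range (k + 1), q j = 1) (hqk : ∀ j, k < j → q j = 0)
    (hΔ : ∀ i ∈ Icc 1 k, 0 < Δ i) (hη : 0 < η)
    (hηq : k ≠ 0 → η ≤ ∑ l ∈ range k, q l * ∑ i ∈ Icc (l + 1) k, 1 / Δ i) :
    ({0}ᶜ : Set ℕ).indicator 1 k
        + ∑' j, ENNReal.ofReal (q j) * ENNReal.ofReal (driftPotential Δ η j)
      ≤ ENNReal.ofReal (driftPotential Δ η k) := by
  have hpot : ∀ j ∈ range (k + 1), 0 ≤ q j * driftPotential Δ η j := fun j hj =>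
    mul_nonneg (hq0 j) (driftPotential_nonneg
      (fun i hi => hΔ i (by simp at hi hj ⊢; omega)) hη.le)
  have hsum : ∑' j, ENNReal.ofReal (q j) * ENNReal.ofReal (driftPotential Δ η j)
      = ENNReal.ofReal (∑ j ∈ range (k + 1), q j * driftPotential Δ η j) := by
    rw [tsum_eq_sum (s := range (k + 1)) fun j hj => by simp [hqk j (by simpa using hj)],
      ENNReal.ofReal_sum_of_nonneg hpot]
    exact sum_congr rfl fun j _ => (ENNReal.ofReal_mul (hq0 j)).symm
  rw [hsum]
  rcases Nat.eq_zero_or_pos k with rfl | hk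
  · simp [driftPotential]
  · rw [Set.indicator_of_mem hk.ne', Pi.one_apply, ← ENNReal.ofReal_one,
      ← ENNReal.ofReal_add zero_le_one (sum_nonneg hpot)]
    exact ENNReal.ofReal_le_ofReal
      (one_add_sum_mul_driftPotential_le hq1 hη (hηq hk.ne'))

end DriftPotential

theorem variable_drift_upper_with_error_general
    {Ω : Type*} {m0 : MeasurableSpace Ω} {μ : Measure Ω}
    (N : ℕ) (X : ℕ → Ω → ℕ)
    (hmeas : ∀ t, Measurable (X t))
    (hrange : ∀ t ω, X t ω ≤ N)
    (hdec : ∀ t ω, X (t + 1) ω ≤ X t ω)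
    (p : ℕ → ℕ → ℝ)
    (hp0 : ∀ k j, 0 ≤ p k j)
    (hp1 : ∀ k, k ≤ N → ∑ j ∈ range (N + 1), p k j = 1)
    (hMarkov : IsMarkovWith μ X p)
    (Δ : ℕ → ℝ)
    (hΔpos : ∀ k, 1 ≤ k → k ≤ N → 0 < Δ k)
    (hdrift : ∀ k, 1 ≤ k → k ≤ N →
      Δ k ≤ ∑ j ∈ range (N + 1), p k j * ((k : ℝ) - j))
    (ηstar : ℝ)
    (hηstar : IsLeast
      ((fun k => ∑ l ∈ range k, p k l * ∑ j ∈ Icc (l + 1) k, 1 / Δ j) ''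
        (Set.Icc 1 N)) ηstar) :
    ∀ k0, k0 ≤ N → μ {ω | X 0 ω = k0} ≠ 0 →
      ∫⁻ ω, (hitZero X ω : ENNReal) ∂(μ[|{ω | X 0 ω = k0}])
        ≤ ENNReal.ofReal (∑ k ∈ Icc 1 k0, 1 / (ηstar * Δ k)) := by
  intro k0 _ _
  set A := {ω | X 0 ω = k0}
  have hA : MeasurableSet A := hmeas 0 (measurableSet_singleton k0)
  have hΔ : ∀ k ≤ N, ∀ i ∈ Icc 1 k, 0 < Δ i := fun k hkN i hi =>
    hΔpos i (mem_Icc.1 hi).1 ((mem_Icc.1 hi).2.trans hkN)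
  have hη : 0 < ηstar := by
    obtain ⟨k, ⟨hk1, hkN⟩, rfl⟩ := hηstar.1
    exact sum_mul_sum_one_div_pos _ (hp0 k) (hΔ k hkN)
      ((hΔpos k hk1 hkN).trans_le (hdrift k hk1 hkN))
  have hν := hMarkov.hasTransitionProbs_restrict (hmeas 0) k0
  set g := fun k => ENNReal.ofReal (driftPotential Δ ηstar k)
  have hbound := hν.tsum_lintegral_le hmeas (({0}ᶜ : Set ℕ).indicator 1) g fun t k hk => by
    obtain ⟨ω, rfl⟩ := nonempty_of_measure_ne_zero hk
    have hpk : ∀ j, X t ω < j → p (X t ω) j = 0 := fun j =>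
      hν.eq_zero_of_lt (hdec t) (hp0 _ j) hk
    refine indicator_add_tsum_le_driftPotential (hp0 _) ?_ hpk (hΔ _ (hrange t ω)) hη
      fun hk0 => hηstar.2 ⟨_, ⟨Nat.one_le_iff_ne_zero.2 hk0, hrange t ω⟩, rfl⟩
    rw [← hp1 _ (hrange t ω)]
    exact sum_subset (range_subset_range.2 (by have := hrange t ω; omega)) fun j hjN hjk =>
      hpk j (by simp only [mem_range] at hjN hjk; omega)
  calc ∫⁻ ω, (hitZero X ω : ℝ≥0∞) ∂μ[|A]
      = (μ A)⁻¹ * ∑' t, ∫⁻ ω, ({0}ᶜ : Set ℕ).indicator 1 (X t ω) ∂μ.restrict A := by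
        rw [ProbabilityTheory.cond, lintegral_smul_measure, lintegral_hitZero hmeas hdec,
          smul_eq_mul]
    _ ≤ (μ A)⁻¹ * ∫⁻ ω in A, g (X 0 ω) ∂μ := mul_le_mul_right hbound _
    _ = g k0 * ((μ A)⁻¹ * μ A) := by
        rw [setLIntegral_congr_fun hA fun ω hω => by
          rw [show X 0 ω = k0 from hω], setLIntegral_const]
        ring
    _ ≤ g k0 := mul_le_of_le_one_right' (ENNReal.inv_mul_le_one _)

/-- Variable drift theorem (upper bound, with error bound): for a non-increasing
Markov process on `{0, …, N}` whose drift from state `k` is at least `Δ k`, with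
`η k = E[∑_{j=X_{t+1}+1}^{k} 1 / Δ j | X_t = k] = ∑_{ℓ<k} p k ℓ ∑_{j=ℓ+1}^{k} 1 / Δ j`
and `η* = min_{1 ≤ k ≤ N} η k`, the first hitting time of `0` satisfies
`E[T | X_0] ≤ ∑_{k=1}^{X_0} 1 / (η* Δ k)`. -/
theorem variable_drift_upper_with_error
    {Ω : Type*} {m0 : MeasurableSpace Ω} {μ : Measure Ω} [IsProbabilityMeasure μ]
    (N : ℕ) (X : ℕ → Ω → ℕ)
    (hmeas : ∀ t, Measurable (X t))
    (hrange : ∀ t ω, X t ω ≤ N)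
    (hdec : ∀ t ω, X (t + 1) ω ≤ X t ω)
    (p : ℕ → ℕ → ℝ)
    (hp0 : ∀ k j, 0 ≤ p k j)
    (hp1 : ∀ k, k ≤ N → ∑ j ∈ range (N + 1), p k j = 1)
    (hMarkov : IsMarkovWith μ X p)
    (Δ : ℕ → ℝ)
    (hΔpos : ∀ k, 1 ≤ k → k ≤ N → 0 < Δ k)
    (hdrift : ∀ k, 1 ≤ k → k ≤ N →
      Δ k ≤ ∑ j ∈ range (N + 1), p k j * ((k : ℝ) - j))
    (ηstar : ℝ)
    (hηstar : IsLeast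
      ((fun k => ∑ l ∈ range k, p k l * ∑ j ∈ Icc (l + 1) k, 1 / Δ j) ''
        (Set.Icc 1 N)) ηstar) :
    ∀ k0, k0 ≤ N → μ {ω | X 0 ω = k0} ≠ 0 →
      ∫⁻ ω, (hitZero X ω : ENNReal) ∂(μ[|{ω | X 0 ω = k0}])
        ≤ ENNReal.ofReal (∑ k ∈ Icc 1 k0, 1 / (ηstar * Δ k)) :=
  variable_drift_upper_with_error_general (m0 := m0) N X hmeas hrange hdec p hp0 hp1 hMarkov Δ hΔpos
    hdrift ηstar hηstar
end

section
/- For n ≥ 2, k ≥ 1 and ℓ ∈ {1, ..., k−1}, the drift Δ(·) of the (1+1) EA on OneMax satisfies 1/Δ(k−ℓ) − 1/Δ(k) ≤ 2e²ℓn² / (k(k−ℓ)(n−1)). -/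
/-!
With `X ~ Bin(k, 1/n)` the flipped zero-bits and `Y ~ Bin(n - k, 1/n)` the flipped one-bits,
`Δ(k) = 𝔼[(X - Y)⁺]`. Turning one zero-bit into a one-bit moves one Bernoulli trial from `X` to
`Y`, which changes `(X - Y)⁺` by at most the two outcomes involved; hence
`Δ(k + m) ≤ Δ(k) + 2m/n`. The outcome `X = 1, Y = 0` alone gives
`Δ(k) ≥ (k/n)(1 - 1/n)^(n-1) ≥ e⁻¹k/n`. Finally
`1/Δ(k-ℓ) - 1/Δ(k) = (Δ(k) - Δ(k-ℓ)) / (Δ(k-ℓ)Δ(k))`.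
-/

open Finset

/-- Drift `Δ_n(k)`: the expected one-step decrease of the number of zero-bits of
the (1+1) EA (mutation rate `1/n`) on OneMax from a state with `k` zero-bits. -/
noncomputable def Delta (n k : ℕ) : ℝ :=
  ∑ l ∈ Icc 1 k, ∑ j ∈ range (l + 1),
    ((l : ℝ) - j) * (k.choose l) * ((n - k).choose j) *
      (1 / n) ^ (l + j) * (1 - 1 / n) ^ (n - l - j)

section Binomial

variable {p q : ℝ}

/-- `∑ᵢ C(a,i) pⁱ qᵃ⁻ⁱ g(i)`, i.e. `𝔼[g X]` for `X ~ Bin(a, p)` when `p + q = 1`. -/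
noncomputable def binomialSum (p q : ℝ) (a : ℕ) (g : ℕ → ℝ) : ℝ :=
  ∑ i ∈ range (a + 1), a.choose i * (p ^ i * q ^ (a - i) * g i)

theorem binomialSum_succ (a : ℕ) (g : ℕ → ℝ) :
    binomialSum p q (a + 1) g =
      q * binomialSum p q a g + p * binomialSum p q a (fun i ↦ g (i + 1)) := by
  rw [binomialSum, sum_choose_succ_mul (fun i j ↦ p ^ i * q ^ j * g i), binomialSum,
    binomialSum, mul_sum, mul_sum]
  congr 1 <;> refine sum_congr rfl fun i hi ↦ ?_
  · rw [Nat.sub_add_comm (mem_range_succ_iff.mp hi), pow_succ]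
    ring
  · ring

theorem binomialSum_add (a : ℕ) (g h : ℕ → ℝ) :
    binomialSum p q a (fun i ↦ g i + h i) = binomialSum p q a g + binomialSum p q a h := by
  simp only [binomialSum, mul_add, sum_add_distrib]

theorem binomialSum_const_mul (a : ℕ) (c : ℝ) (g : ℕ → ℝ) :
    binomialSum p q a (fun i ↦ c * g i) = c * binomialSum p q a g := by
  simp only [binomialSum, mul_sum]
  exact sum_congr rfl fun i _ ↦ by ring

theorem binomialSum_const (a : ℕ) (c : ℝ) :
    binomialSum p q a (fun _ ↦ c) = c * (p + q) ^ a := by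
  simp only [binomialSum, add_pow, mul_sum]
  exact sum_congr rfl fun i _ ↦ by ring

theorem binomialSum_add_const (hpq : p + q = 1) (a : ℕ) (g : ℕ → ℝ) (c : ℝ) :
    binomialSum p q a (fun i ↦ g i + c) = binomialSum p q a g + c := by
  rw [binomialSum_add, binomialSum_const, hpq, one_pow, mul_one]

theorem binomialSum_mono (hp : 0 ≤ p) (hq : 0 ≤ q) (a : ℕ) {g h : ℕ → ℝ}
    (hgh : ∀ i, g i ≤ h i) : binomialSum p q a g ≤ binomialSum p q a h :=
  sum_le_sum fun i _ ↦ by gcongr; exact hgh i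

theorem binomialSum_nonneg (hp : 0 ≤ p) (hq : 0 ≤ q) (a : ℕ) {g : ℕ → ℝ}
    (hg : ∀ i, 0 ≤ g i) : 0 ≤ binomialSum p q a g :=
  sum_nonneg fun i _ ↦ by have := hg i; positivity

theorem single_le_binomialSum (hp : 0 ≤ p) (hq : 0 ≤ q) {a i : ℕ} (hi : i ≤ a) {g : ℕ → ℝ}
    (hg : ∀ i, 0 ≤ g i) : a.choose i * (p ^ i * q ^ (a - i) * g i) ≤ binomialSum p q a g :=
  single_le_sum (f := fun i ↦ a.choose i * (p ^ i * q ^ (a - i) * g i))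
    (fun i _ ↦ by have := hg i; positivity) (mem_range_succ_iff.mpr hi)

/-- `𝔼[(X - Y)⁺]` for independent `X ~ Bin(a, p)`, `Y ~ Bin(b, p)` when `p + q = 1`. -/
noncomputable def binomialPosDiff (p q : ℝ) (a b : ℕ) : ℝ :=
  binomialSum p q a fun i ↦ binomialSum p q b fun j ↦ ((i - j : ℕ) : ℝ)

theorem binomialPosDiff_succ_le (hp : 0 ≤ p) (hq : 0 ≤ q) (hpq : p + q = 1) (a b : ℕ) :
    binomialPosDiff p q (a + 1) b ≤ binomialPosDiff p q a (b + 1) + 2 * p := by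
  have hshift : ∀ i, binomialSum p q b (fun j ↦ ((i + 1 - j : ℕ) : ℝ)) ≤
      binomialSum p q b (fun j ↦ ((i - (j + 1) : ℕ) : ℝ)) + 2 := fun i ↦ by
    rw [← binomialSum_add_const hpq]
    refine binomialSum_mono hp hq b fun j ↦ ?_
    exact_mod_cast (by omega : i + 1 - j ≤ i - (j + 1) + 2)
  have hsplit := binomialSum_mono hp hq a hshift
  rw [binomialSum_add_const hpq] at hsplit
  unfold binomialPosDiff
  simp only [binomialSum_succ (a := b), binomialSum_add, binomialSum_const_mul]
  rw [binomialSum_succ]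
  linarith [mul_le_mul_of_nonneg_left hsplit hp]

theorem binomialPosDiff_add_le (hp : 0 ≤ p) (hq : 0 ≤ q) (hpq : p + q = 1) (a b m : ℕ) :
    binomialPosDiff p q (a + m) b ≤ binomialPosDiff p q a (b + m) + 2 * m * p := by
  induction m generalizing b with
  | zero => simp
  | succ m ih =>
    calc binomialPosDiff p q (a + m + 1) b
        ≤ binomialPosDiff p q (a + m) (b + 1) + 2 * p := binomialPosDiff_succ_le hp hq hpq _ _
      _ ≤ binomialPosDiff p q a (b + 1 + m) + 2 * m * p + 2 * p := by gcongr; exact ih _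
      _ = binomialPosDiff p q a (b + (m + 1)) + 2 * ↑(m + 1) * p := by
        rw [add_assoc b, add_comm 1 m]; push_cast; ring

theorem mul_mul_pow_le_binomialPosDiff (hp : 0 ≤ p) (hq : 0 ≤ q) {a : ℕ} (ha : 1 ≤ a) (b : ℕ) :
    a * p * q ^ (a - 1 + b) ≤ binomialPosDiff p q a b := by
  have hinner : ∀ i, 0 ≤ binomialSum p q b fun j ↦ ((i - j : ℕ) : ℝ) := fun i ↦
    binomialSum_nonneg hp hq b fun j ↦ Nat.cast_nonneg _
  have hY0 : q ^ b ≤ binomialSum p q b fun j ↦ ((1 - j : ℕ) : ℝ) := by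
    simpa using single_le_binomialSum hp hq (Nat.zero_le b) (g := fun j ↦ ((1 - j : ℕ) : ℝ))
      fun j ↦ Nat.cast_nonneg _
  calc a * p * q ^ (a - 1 + b) = a * (p * q ^ (a - 1) * q ^ b) := by rw [pow_add]; ring
    _ ≤ a * (p * q ^ (a - 1) * binomialSum p q b fun j ↦ ((1 - j : ℕ) : ℝ)) := by gcongr
    _ ≤ binomialPosDiff p q a b := by
      simpa [binomialPosDiff] using single_le_binomialSum hp hq ha hinner

end Binomial

theorem exp_neg_one_le_one_sub_inv_pow (n : ℕ) :
    Real.exp (-1) ≤ (1 - 1 / (n : ℝ)) ^ (n - 1) := by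
  rcases n with _ | _ | m
  · simp
  · simp
  have h : 1 - 1 / ((m + 1 + 1 : ℕ) : ℝ) = (1 + ((m + 1 : ℕ) : ℝ)⁻¹)⁻¹ := by
    push_cast; field_simp; ring
  rw [h, Nat.add_sub_cancel, inv_pow, Real.exp_neg]
  exact inv_anti₀ (by positivity) Real.one_add_inv_pow_le_exp

theorem Delta_eq_binomialPosDiff {n k : ℕ} (hkn : k ≤ n) :
    Delta n k = binomialPosDiff (1 / n) (1 - 1 / n) k (n - k) := by
  set p : ℝ := 1 / n
  set q : ℝ := 1 - 1 / n
  -- Both inner sums extend to `j ≤ n`: the added terms vanish through `(l - j)⁺` or `C(n - k, j)`.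
  let t (l j : ℕ) : ℝ :=
    ((l - j : ℕ) : ℝ) * k.choose l * (n - k).choose j * p ^ (l + j) * q ^ (n - l - j)
  have hDelta : ∀ l ≤ k, ∑ j ∈ range (l + 1),
      ((l : ℝ) - j) * k.choose l * (n - k).choose j * p ^ (l + j) * q ^ (n - l - j) =
      ∑ j ∈ range (n + 1), t l j := fun l hl ↦ by
    refine sum_subset_zero_on_sdiff (range_subset_range.mpr (by omega)) (fun j hj ↦ ?_)
      (fun j hj ↦ ?_)
    · simp [t, Nat.sub_eq_zero_of_le (by simp only [mem_sdiff, mem_range] at hj; omega : l ≤ j)]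
    · simp [t, Nat.cast_sub (mem_range_succ_iff.mp hj)]
  have hbinom : ∀ l ≤ k, k.choose l * (p ^ l * q ^ (k - l) *
      binomialSum p q (n - k) fun j ↦ ((l - j : ℕ) : ℝ)) = ∑ j ∈ range (n + 1), t l j :=
    fun l hl ↦ by
    rw [binomialSum, mul_sum, mul_sum]
    refine sum_subset_zero_on_sdiff (range_subset_range.mpr (by omega)) (fun j hj ↦ ?_)
      (fun j hj ↦ ?_)
    · have : n - k < j := by simp only [mem_sdiff, mem_range] at hj; omega
      simp [t, Nat.choose_eq_zero_of_lt this]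
    · have : n - l - j = (k - l) + (n - k - j) := by have := mem_range_succ_iff.mp hj; omega
      simp only [t, this, pow_add]
      ring
  rw [Delta, binomialPosDiff, binomialSum,
    sum_congr rfl fun l hl ↦ hDelta l (mem_Icc.mp hl).2,
    sum_congr rfl fun l hl ↦ hbinom l (mem_range_succ_iff.mp hl)]
  refine sum_subset_zero_on_sdiff (fun l hl ↦ by simp only [mem_Icc, mem_range] at hl ⊢; omega)
    (fun l hl ↦ ?_) fun _ _ ↦ rfl
  obtain rfl : l = 0 := by simp only [mem_sdiff, mem_range, mem_Icc] at hl; omega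
  simp [t]

theorem exp_neg_one_mul_div_le_Delta {n k : ℕ} (hk : 1 ≤ k) (hkn : k ≤ n) :
    Real.exp (-1) * k / n ≤ Delta n k := by
  rw [Delta_eq_binomialPosDiff hkn]
  calc Real.exp (-1) * k / n = k * (1 / n) * Real.exp (-1) := by ring
    _ ≤ k * (1 / n) * (1 - 1 / (n : ℝ)) ^ (n - 1) := by
        gcongr
        exact exp_neg_one_le_one_sub_inv_pow n
    _ = k * (1 / n) * (1 - 1 / (n : ℝ)) ^ (k - 1 + (n - k)) := by congr 2; omega
    _ ≤ _ := mul_mul_pow_le_binomialPosDiff (Nat.one_div_cast_nonneg n)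
        (Nat.one_sub_one_div_cast_nonneg n) hk _

theorem Delta_add_le {n k m : ℕ} (hkmn : k + m ≤ n) :
    Delta n (k + m) ≤ Delta n k + 2 * m / n := by
  have h := binomialPosDiff_add_le (Nat.one_div_cast_nonneg n) (Nat.one_sub_one_div_cast_nonneg n)
    (add_sub_cancel _ _) k (n - (k + m)) m
  rwa [show n - (k + m) + m = n - k by omega, ← Delta_eq_binomialPosDiff hkmn,
    ← Delta_eq_binomialPosDiff (by omega), mul_one_div] at h

theorem one_div_sub_one_div_le_of_le {a b x y d : ℝ} (hx : 0 < x) (hy : 0 < y) (hxa : x ≤ a)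
    (hyb : y ≤ b) (hd : 0 ≤ d) (hba : b - a ≤ d) : 1 / a - 1 / b ≤ d / (x * y) := by
  rw [div_sub_div _ _ (hx.trans_le hxa).ne' (hy.trans_le hyb).ne', one_mul, mul_one]
  gcongr
  exact hx.le.trans hxa

theorem inv_delta_diff_upper_general (n k l : ℕ) (hl : 1 ≤ l)
    (hlk : l ≤ k - 1) (hkn : k ≤ n) :
    1 / Delta n (k - l) - 1 / Delta n k
      ≤ 2 * Real.exp 1 ^ 2 * l * n ^ 2 / (k * (k - l) * ((n : ℝ) - 1)) := by
  have hkl : ((k - l : ℕ) : ℝ) = k - l := Nat.cast_sub (by omega)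
  have hkl_pos : (0 : ℝ) < k - l := by rw [← hkl]; exact_mod_cast (by omega : 0 < k - l)
  have hk_pos : (0 : ℝ) < k := by exact_mod_cast (by omega : 0 < k)
  have hn : (1 : ℝ) < n := by exact_mod_cast (by omega : 1 < n)
  have hlow : Real.exp (-1) * (k - l) / n ≤ Delta n (k - l) :=
    hkl ▸ exp_neg_one_mul_div_le_Delta (by omega) (by omega)
  have hlow' : Real.exp (-1) * k / n ≤ Delta n k := exp_neg_one_mul_div_le_Delta (by omega) hkn
  have hdiff : Delta n k ≤ Delta n (k - l) + 2 * l / n := by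
    simpa [Nat.sub_add_cancel (by omega : l ≤ k)] using
      Delta_add_le (n := n) (k := k - l) (m := l) (by omega)
  calc 1 / Delta n (k - l) - 1 / Delta n k
      ≤ (2 * l / n) / ((Real.exp (-1) * (k - l) / n) * (Real.exp (-1) * k / n)) :=
        one_div_sub_one_div_le_of_le (by positivity) (by positivity) hlow hlow' (by positivity)
          (by linarith)
    _ = 2 * Real.exp 1 ^ 2 * l * n ^ 2 / (k * (k - l) * n) := by
        rw [Real.exp_neg]; field_simp
    _ ≤ 2 * Real.exp 1 ^ 2 * l * n ^ 2 / (k * (k - l) * ((n : ℝ) - 1)) := by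
        have := sub_pos.mpr hn
        gcongr
        linarith

/-- For `k ≥ 1` and `ℓ ∈ {1, …, k−1}` (states of the (1+1) EA on OneMax, so
`k ≤ n`), the inverse drifts satisfy
`1/Δ(k−ℓ) − 1/Δ(k) ≤ 2e²ℓn² / (k(k−ℓ)(n−1))`. -/
theorem inv_delta_diff_upper (n k l : ℕ) (hn : 2 ≤ n) (hl : 1 ≤ l)
    (hlk : l ≤ k - 1) (hk : 1 ≤ k) (hkn : k ≤ n) :
    1 / Delta n (k - l) - 1 / Delta n k
      ≤ 2 * Real.exp 1 ^ 2 * l * n ^ 2 / (k * (k - l) * ((n : ℝ) - 1)) :=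
  inv_delta_diff_upper_general n k l hl hlk hkn
end

section
/- For n ≥ 2 and k ∈ {2, ..., ⌊n/2⌋}, the drift Δ(·) of the (1+1) EA on OneMax satisfies 1/Δ(k−1) − 1/Δ(k) ≥ n/(ek²). -/
open Finset

/-! Write `p = 1/n`, `q = 1 - 1/n`. From a state with `k` zero-bits the number of flipped zero-bits
is `X ~ Bin(k, p)`, the number of flipped one-bits is an independent `Y ~ Bin(n - k, p)`, and the
mutation is accepted iff `Y ≤ X`, so `Δ(k) = E[(X - Y)⁺]`. Hence `Δ(k) ≤ E[X] = kp`, and moving one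
trial from `Y` to `X` gives `Δ(k) - Δ(k-1) ≥ p q^(n-1) ≥ p/e`. Therefore
`1/Δ(k-1) - 1/Δ(k) = (Δ(k) - Δ(k-1)) / (Δ(k-1) Δ(k)) ≥ (p/e) / (kp)² = n/(ek²)`. -/

section BinomialSum

variable (p q : ℝ)

noncomputable def binomWeight (a x : ℕ) : ℝ := a.choose x * p ^ x * q ^ (a - x)

/-- For `p + q = 1`, the expectation of `g` under `Bin(a, p)`. -/
noncomputable def binomSum (a : ℕ) (g : ℕ → ℝ) : ℝ :=
  ∑ x ∈ range (a + 1), g x * binomWeight p q a x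

/-- For `p + q = 1`, the expectation of `(X - Y)⁺` for independent `X ~ Bin(a, p)` and
`Y ~ Bin(b, p)`; the cast of the truncated difference `x - y : ℕ` is the positive part. -/
noncomputable def binomDrift (a b : ℕ) : ℝ :=
  binomSum p q a fun x => binomSum p q b fun y => ((x - y : ℕ) : ℝ)

variable {p q}

lemma binomWeight_nonneg (hp : 0 ≤ p) (hq : 0 ≤ q) (a x : ℕ) : 0 ≤ binomWeight p q a x := by
  unfold binomWeight; positivity

lemma binomWeight_succ_succ (a x : ℕ) :
    binomWeight p q (a + 1) (x + 1) = q * binomWeight p q a (x + 1) + p * binomWeight p q a x := by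
  unfold binomWeight
  rw [Nat.choose_succ_succ, Nat.succ_sub_succ]
  rcases le_or_gt (x + 1) a with h | h
  · rw [show a - x = a - (x + 1) + 1 by omega]
    push_cast; ring
  · rw [Nat.choose_eq_zero_of_lt h, show a - x = 0 by omega]
    push_cast; ring

lemma binomWeight_succ_zero (a : ℕ) : binomWeight p q (a + 1) 0 = q * binomWeight p q a 0 := by
  simp only [binomWeight, Nat.choose_zero_right, pow_zero, Nat.sub_zero, pow_succ]
  ring

lemma binomSum_eq_sum_range_of_le {a N : ℕ} (h : a ≤ N) (g : ℕ → ℝ) :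
    binomSum p q a g = ∑ x ∈ range (N + 1), g x * binomWeight p q a x := by
  refine sum_subset (range_subset_range.2 (by omega)) fun x _ hx => ?_
  rw [binomWeight, Nat.choose_eq_zero_of_lt (by simpa using hx)]
  simp

lemma binomSum_zero (g : ℕ → ℝ) : binomSum p q 0 g = g 0 := by
  simp [binomSum, binomWeight]

/-- Conditioning on the last trial. -/
lemma binomSum_succ (a : ℕ) (g : ℕ → ℝ) :
    binomSum p q (a + 1) g = q * binomSum p q a g + p * binomSum p q a fun x => g (x + 1) := by
  have hterm : ∀ x, g (x + 1) * binomWeight p q (a + 1) (x + 1)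
      = q * (g (x + 1) * binomWeight p q a (x + 1)) + p * (g (x + 1) * binomWeight p q a x) := by
    intro x; rw [binomWeight_succ_succ]; ring
  rw [binomSum_eq_sum_range_of_le a.le_succ, binomSum, binomSum,
    sum_range_succ' (fun x => g x * binomWeight p q (a + 1) x),
    sum_range_succ' (fun x => g x * binomWeight p q a x), binomWeight_succ_zero]
  simp only [hterm, sum_add_distrib, ← mul_sum]
  ring

lemma binomSum_add (a : ℕ) (g h : ℕ → ℝ) :
    binomSum p q a (fun x => g x + h x) = binomSum p q a g + binomSum p q a h := by
  simp only [binomSum, add_mul, sum_add_distrib]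

lemma binomSum_sub (a : ℕ) (g h : ℕ → ℝ) :
    binomSum p q a (fun x => g x - h x) = binomSum p q a g - binomSum p q a h := by
  simp only [binomSum, sub_mul, sum_sub_distrib]

lemma binomSum_const_mul (a : ℕ) (c : ℝ) (g : ℕ → ℝ) :
    binomSum p q a (fun x => c * g x) = c * binomSum p q a g := by
  simp only [binomSum, mul_sum, mul_assoc]

lemma binomSum_mono (hp : 0 ≤ p) (hq : 0 ≤ q) (a : ℕ) {g h : ℕ → ℝ} (hgh : ∀ x, g x ≤ h x) :
    binomSum p q a g ≤ binomSum p q a h :=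
  sum_le_sum fun x _ => mul_le_mul_of_nonneg_right (hgh x) (binomWeight_nonneg hp hq a x)

lemma binomSum_nonneg (hp : 0 ≤ p) (hq : 0 ≤ q) (a : ℕ) {g : ℕ → ℝ} (hg : ∀ x, 0 ≤ g x) :
    0 ≤ binomSum p q a g :=
  sum_nonneg fun x _ => mul_nonneg (hg x) (binomWeight_nonneg hp hq a x)

lemma mul_pow_le_binomSum (hp : 0 ≤ p) (hq : 0 ≤ q) (a : ℕ) {g : ℕ → ℝ} (hg : ∀ x, 0 ≤ g x) :
    g 0 * q ^ a ≤ binomSum p q a g := by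
  have h0 : g 0 * q ^ a = g 0 * binomWeight p q a 0 := by simp [binomWeight]
  rw [h0]
  exact single_le_sum (f := fun x => g x * binomWeight p q a x)
    (fun x _ => mul_nonneg (hg x) (binomWeight_nonneg hp hq a x)) (mem_range.2 a.succ_pos)

lemma binomSum_const (hpq : p + q = 1) (a : ℕ) (c : ℝ) : binomSum p q a (fun _ => c) = c := by
  induction a with
  | zero => exact binomSum_zero _
  | succ a ih => rw [binomSum_succ, ih]; linear_combination c * hpq

lemma binomSum_id (hpq : p + q = 1) (a : ℕ) : binomSum p q a (fun x => (x : ℝ)) = a * p := by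
  induction a with
  | zero => simp [binomSum_zero]
  | succ a ih =>
    simp only [binomSum_succ, Nat.cast_succ, binomSum_add, binomSum_const hpq, ih]
    linear_combination (a * p) * hpq

lemma binomDrift_le (hp : 0 ≤ p) (hq : 0 ≤ q) (hpq : p + q = 1) (a b : ℕ) :
    binomDrift p q a b ≤ a * p :=
  calc binomDrift p q a b ≤ binomSum p q a fun x => (x : ℝ) :=
        binomSum_mono hp hq a fun x =>
          (binomSum_mono hp hq b fun y => Nat.cast_le.2 (Nat.sub_le x y)).trans_eq
            (binomSum_const hpq b x)
    _ = a * p := binomSum_id hpq a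

/-- Moving one trial from `Y` to `X` raises `(X - Y)⁺` by one if that trial succeeds and
`Y ≤ X`, and leaves it unchanged otherwise; of the event `Y ≤ X` only `X = Y = 0` is kept. -/
lemma mul_pow_le_binomDrift_sub (hp : 0 ≤ p) (hq : 0 ≤ q) (a b : ℕ) :
    p * q ^ (a + b) ≤ binomDrift p q (a + 1) b - binomDrift p q a (b + 1) := by
  set jump : ℕ → ℕ → ℝ := fun x y => ((x + 1 - y : ℕ) : ℝ) - ((x - (y + 1) : ℕ) : ℝ)
  have hdiff : binomDrift p q (a + 1) b - binomDrift p q a (b + 1)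
      = p * binomSum p q a fun x => binomSum p q b fun y => jump x y := by
    simp only [jump, binomDrift, binomSum_succ, binomSum_add, binomSum_const_mul, binomSum_sub]
    ring
  have hjump : ∀ x y, 0 ≤ jump x y := fun x y => sub_nonneg.2 (Nat.cast_le.2 (by omega))
  have hjump₀ : jump 0 0 = 1 := by simp [jump]
  rw [hdiff, pow_add]
  refine mul_le_mul_of_nonneg_left ?_ hp
  calc q ^ a * q ^ b = (jump 0 0 * q ^ b) * q ^ a := by rw [hjump₀]; ring
    _ ≤ (binomSum p q b fun y => jump 0 y) * q ^ a :=
        mul_le_mul_of_nonneg_right (mul_pow_le_binomSum hp hq b (hjump 0)) (pow_nonneg hq a)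
    _ ≤ _ := mul_pow_le_binomSum hp hq a fun x => binomSum_nonneg hp hq b (hjump x)

lemma binomDrift_succ_pos (hp : 0 < p) (hq : 0 < q) (a b : ℕ) :
    0 < binomDrift p q (a + 1) b := by
  have hgap := mul_pow_le_binomDrift_sub hp.le hq.le a b
  have hnonneg : 0 ≤ binomDrift p q a (b + 1) :=
    binomSum_nonneg hp.le hq.le a fun x =>
      binomSum_nonneg hp.le hq.le (b + 1) fun y => Nat.cast_nonneg _
  have : 0 < p * q ^ (a + b) := by positivity
  linarith

end BinomialSum

lemma Delta_eq_binomDrift {n k : ℕ} (hk : k ≤ n) :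
    Delta n k = binomDrift (1 / n) (1 - 1 / n) k (n - k) := by
  set p : ℝ := 1 / n
  set q : ℝ := 1 - 1 / n
  have hinner : ∀ l ≤ k, ∑ j ∈ range (l + 1),
      ((l : ℝ) - j) * k.choose l * (n - k).choose j * p ^ (l + j) * q ^ (n - l - j)
        = (binomSum p q (n - k) fun j => ((l - j : ℕ) : ℝ)) * binomWeight p q k l := by
    intro l hl
    rw [binomSum_eq_sum_range_of_le (Nat.sub_le n k), sum_mul]
    refine Eq.trans (sum_congr rfl fun j hj => ?_) (sum_subset (range_subset_range.2 (by omega))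
      fun j _ hj => by rw [Nat.sub_eq_zero_of_le (by simp at hj; omega)]; simp)
    rw [Nat.cast_sub (Nat.lt_succ_iff.1 (mem_range.1 hj))]
    rcases le_or_gt j (n - k) with hjn | hjn
    · rw [show n - l - j = (k - l) + (n - k - j) by omega, pow_add, pow_add, binomWeight,
        binomWeight]
      ring
    · simp [binomWeight, Nat.choose_eq_zero_of_lt hjn]
  rw [Delta, binomDrift, binomSum, sum_congr rfl fun l hl => hinner l (mem_Icc.1 hl).2]
  refine sum_subset (fun l hl => by simp at hl ⊢; omega) fun l hl hl' => ?_
  rw [show l = 0 by simp at hl hl'; omega]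
  simp [binomSum]

lemma inv_exp_one_le_one_sub_inv_pow (n : ℕ) :
    (Real.exp 1)⁻¹ ≤ (1 - 1 / (n : ℝ)) ^ (n - 1) := by
  rcases n with _ | _ | m
  · simpa using inv_le_one_of_one_le₀ (Real.one_le_exp zero_le_one)
  · simpa using inv_le_one_of_one_le₀ (Real.one_le_exp zero_le_one)
  · have hbase : 1 - 1 / ((m + 2 : ℕ) : ℝ) = (1 + ((m + 1 : ℕ) : ℝ)⁻¹)⁻¹ := by
      push_cast; field_simp; ring
    rw [hbase, show m + 2 - 1 = m + 1 by omega, inv_pow]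
    exact inv_anti₀ (by positivity) Real.one_add_inv_pow_le_exp

lemma div_sq_le_inv_sub_inv {x y M d : ℝ} (hx : 0 < x) (hd : 0 ≤ d) (hxy : d ≤ y - x)
    (hyM : y ≤ M) : d / M ^ 2 ≤ 1 / x - 1 / y := by
  have hy : 0 < y := by linarith
  rw [div_sub_div _ _ hx.ne' hy.ne', one_mul, mul_one, pow_two]
  exact div_le_div₀ (by linarith) hxy (mul_pos hx hy)
    (mul_le_mul (by linarith) hyM hy.le (by linarith))

theorem inv_delta_diff_lower_general (n k : ℕ) (hk2 : 2 ≤ k)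
    (hkn : k ≤ n / 2) :
    (n : ℝ) / (Real.exp 1 * k ^ 2) ≤ 1 / Delta n (k - 1) - 1 / Delta n k := by
  obtain ⟨a, rfl⟩ : ∃ a, k = a + 2 := ⟨k - 2, by omega⟩
  set p : ℝ := 1 / n
  set q : ℝ := 1 - 1 / n
  have hn : (1 : ℝ) < n := by exact_mod_cast (by omega : 1 < n)
  have hp : 0 < p := by positivity
  have hq : 0 < q := sub_pos.2 ((div_lt_one (by linarith)).2 hn)
  have hΔ₀ : Delta n (a + 2 - 1) = binomDrift p q (a + 1) (n - (a + 2) + 1) := by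
    rw [show a + 2 - 1 = a + 1 from rfl, Delta_eq_binomDrift (by omega),
      show n - (a + 1) = n - (a + 2) + 1 by omega]
  have hΔ₁ : Delta n (a + 2) = binomDrift p q (a + 1 + 1) (n - (a + 2)) :=
    Delta_eq_binomDrift (by omega)
  have hgap : p * (Real.exp 1)⁻¹ ≤ Delta n (a + 2) - Delta n (a + 2 - 1) :=
    calc p * (Real.exp 1)⁻¹ ≤ p * q ^ (a + 1 + (n - (a + 2))) := by
          rw [show a + 1 + (n - (a + 2)) = n - 1 by omega]
          exact mul_le_mul_of_nonneg_left (inv_exp_one_le_one_sub_inv_pow n) hp.le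
      _ ≤ _ := hΔ₀ ▸ hΔ₁ ▸ mul_pow_le_binomDrift_sub hp.le hq.le _ _
  calc (n : ℝ) / (Real.exp 1 * ((a + 2 : ℕ) : ℝ) ^ 2)
      = p * (Real.exp 1)⁻¹ / (((a + 2 : ℕ) : ℝ) * p) ^ 2 := by simp only [p]; field_simp
    _ ≤ _ := div_sq_le_inv_sub_inv (hΔ₀ ▸ binomDrift_succ_pos hp hq _ _) (by positivity) hgap
        (hΔ₁ ▸ binomDrift_le hp.le hq.le (by ring) _ _)

/-- For `k ∈ {2, …, ⌊n/2⌋}` the inverse drifts of the (1+1) EA on OneMax satisfy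
`1/Δ(k−1) − 1/Δ(k) ≥ n/(e k²)`. -/
theorem inv_delta_diff_lower (n k : ℕ) (hn : 2 ≤ n) (hk2 : 2 ≤ k)
    (hkn : k ≤ n / 2) :
    (n : ℝ) / (Real.exp 1 * k ^ 2) ≤ 1 / Delta n (k - 1) - 1 / Delta n k :=
  inv_delta_diff_lower_general n k hk2 hkn
end
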